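/- Let A be an abelian group and Γ a finite connected bipartite graph with vertex set V = V₁ ⊔ V₂ and edge set E. Let e₀ ∈ E be an edge such that the subgraph Γ′ of Γ obtained by deleting the edge e₀ is still connected. Let Θ_A(Γ) (resp. Θ_A(Γ′)) be the subgroup of ⊕_{e∈E} A (resp. of ⊕_{e∈E∖{e₀}} A) consisting of the families whose sum over the edges incident to each vertex vanishes. Then the sequence 0 → Θ_A(Γ′) → Θ_A(Γ) → A is exact, where Θ_A(Γ′) → Θ_A(Γ) is extension by zero at e₀ and Θ_A(Γ) → A is induced by the projection onto the coordinate indexed by e₀; consequently Θ_A(Γ) is isomorphic to Θ_A(Γ′) ⊕ A. -/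

import Mathlib

open scoped Classical

/-- The subgroup `Θ_A(Γ)` of `⊕_{e ∈ E} A` consisting of the families `(x_e)` whose sum over
the edges incident to each vertex vanishes. -/
noncomputable def Theta (A : Type*) [AddCommGroup A] {V : Type*} [Fintype V]
    (G : SimpleGraph V) : AddSubgroup (G.edgeSet → A) where
  carrier := {x | ∀ v : V,
    ∑ e ∈ Finset.univ.filter (fun e : G.edgeSet => v ∈ (e : Sym2 V)), x e = 0}
  zero_mem' := by intro v; simp
  add_mem' := by
    intro x y hx hy v
    simp only [Set.mem_setOf_eq, Pi.add_apply] at *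
    rw [Finset.sum_add_distrib, hx v, hy v, add_zero]
  neg_mem' := by
    intro x hx v
    simp only [Set.mem_setOf_eq, Pi.neg_apply] at *
    rw [Finset.sum_neg_distrib, hx v, neg_zero]

/-- Extension by zero at the deleted edge `e₀`: a family indexed by the edges of
`Γ′ = Γ ∖ {e₀}` is extended to a family indexed by the edges of `Γ`, with value `0` at `e₀`. -/
noncomputable def extendByZero {A : Type*} [AddCommGroup A] {V : Type*}
    (G : SimpleGraph V) (e₀ : Sym2 V)
    (y : (G.deleteEdges {e₀}).edgeSet → A) : G.edgeSet → A :=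
  fun e => if h : (e : Sym2 V) ∈ (G.deleteEdges {e₀}).edgeSet then y ⟨e, h⟩ else 0

/-! Exactness is bookkeeping with extension by zero and restriction. For the splitting it is
enough to find an integer cycle `z ∈ Θ_ℤ(Γ)` with `z e₀ = 1`, since then `a ↦ z • a` is a
section of the projection at `e₀`. As `Γ′` is connected, `e₀ = uv` is not a bridge: some walk
from `u` to `v` avoids `e₀`. Let each step `x → y` of the walk add `±1` on its edge, the sign
being that of the side of `x`, and close the walk up with `e₀`. Because the graph is bipartite
the signs alternate, so the sums at the inner vertices of the walk telescope to zero. -/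

open SimpleGraph Finset

section Deletion

variable {A : Type*} [AddCommGroup A] {V : Type*} {G : SimpleGraph V}

lemma edgeSet_deleteEdges_subset (s : Set (Sym2 V)) : (G.deleteEdges s).edgeSet ⊆ G.edgeSet :=
  edgeSet_mono (G.deleteEdges_le _)

@[simp]
lemma extendByZero_apply_inclusion (e₀ : Sym2 V) (y : (G.deleteEdges {e₀}).edgeSet → A)
    (e : (G.deleteEdges {e₀}).edgeSet) :
    extendByZero G e₀ y (Set.inclusion (edgeSet_deleteEdges_subset {e₀}) e) = y e :=
  dif_pos e.2

lemma extendByZero_apply_self (e₀ : G.edgeSet)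
    (y : (G.deleteEdges {(e₀ : Sym2 V)}).edgeSet → A) :
    extendByZero G e₀ y e₀ = 0 :=
  dif_neg (by simp)

lemma extendByZero_comp_inclusion (e₀ : Sym2 V) (y : (G.deleteEdges {e₀}).edgeSet → A) :
    extendByZero G e₀ y ∘ Set.inclusion (edgeSet_deleteEdges_subset {e₀}) = y :=
  funext (extendByZero_apply_inclusion e₀ y)

lemma extendByZero_injective (e₀ : Sym2 V) :
    Function.Injective (extendByZero (A := A) G e₀) :=
  Function.LeftInverse.injective (g := (· ∘ Set.inclusion (edgeSet_deleteEdges_subset {e₀})))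
    (extendByZero_comp_inclusion e₀)

lemma extendByZero_add (e₀ : Sym2 V) (y y' : (G.deleteEdges {e₀}).edgeSet → A) :
    extendByZero G e₀ (y + y') = extendByZero G e₀ y + extendByZero G e₀ y' := by
  funext e
  simp only [extendByZero, Pi.add_apply]
  split_ifs <;> simp

lemma extendByZero_comp_inclusion_of_apply_eq_zero {e₀ : G.edgeSet} {x : G.edgeSet → A}
    (hx : x e₀ = 0) :
    extendByZero G e₀ (x ∘ Set.inclusion (edgeSet_deleteEdges_subset {(e₀ : Sym2 V)})) = x :=
    by
  funext e
  by_cases he : (e : Sym2 V) ∈ (G.deleteEdges {(e₀ : Sym2 V)}).edgeSet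
  · exact dif_pos he
  · obtain rfl : e = e₀ := Subtype.ext (by simpa [edgeSet_deleteEdges, e.2] using he)
    rw [hx, extendByZero_apply_self]

lemma sum_incident_extendByZero (e₀ : Sym2 V) [Fintype G.edgeSet]
    [Fintype (G.deleteEdges {e₀}).edgeSet] (y : (G.deleteEdges {e₀}).edgeSet → A) (r : V) :
    ∑ e ∈ univ.filter (fun e : G.edgeSet => r ∈ (e : Sym2 V)), extendByZero G e₀ y e =
      ∑ e ∈ univ.filter (fun e : (G.deleteEdges {e₀}).edgeSet => r ∈ (e : Sym2 V)), y e :=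
    by
  let ι : (G.deleteEdges {e₀}).edgeSet ↪ G.edgeSet :=
    ⟨Set.inclusion (edgeSet_deleteEdges_subset _), Set.inclusion_injective _⟩
  let star := univ.filter fun e : (G.deleteEdges {e₀}).edgeSet => r ∈ (e : Sym2 V)
  rw [← sum_subset (s₁ := star.map ι), sum_map]
  · exact sum_congr rfl fun e _ => extendByZero_apply_inclusion e₀ y e
  · simp only [star, subset_iff, mem_map, mem_filter, mem_univ, true_and]
    rintro _ ⟨e, he, rfl⟩
    exact he
  · intro e he hnot
    refine dif_neg fun h => hnot ?_
    simp only [star, mem_map, mem_filter, mem_univ, true_and] at he ⊢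
    exact ⟨⟨e, h⟩, he, rfl⟩

lemma extendByZero_mem_Theta_iff [Fintype V] (e₀ : Sym2 V)
    (y : (G.deleteEdges {e₀}).edgeSet → A) :
    extendByZero G e₀ y ∈ Theta A G ↔ y ∈ Theta A (G.deleteEdges {e₀}) :=
  forall_congr' fun r => by rw [← sum_incident_extendByZero]

lemma apply_eq_zero_iff_exists_extendByZero_eq [Fintype V] {e₀ : G.edgeSet} {x : G.edgeSet → A}
    (hx : x ∈ Theta A G) :
    x e₀ = 0 ↔ ∃ y ∈ Theta A (G.deleteEdges {(e₀ : Sym2 V)}), extendByZero G e₀ y = x :=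
    by
  refine ⟨fun hx₀ => ⟨_, ?_, extendByZero_comp_inclusion_of_apply_eq_zero hx₀⟩, ?_⟩
  · rwa [← extendByZero_mem_Theta_iff, extendByZero_comp_inclusion_of_apply_eq_zero hx₀]
  · rintro ⟨y, -, rfl⟩
    exact extendByZero_apply_self e₀ y

end Deletion

section WalkFlow

variable {V : Type*} {G : SimpleGraph V}

noncomputable def walkFlow (ε : V → ℤ) : ∀ {u v : V}, G.Walk u v → G.edgeSet → ℤ
  | _, _, .nil => 0
  | u, _, .cons (v := w) h p => Pi.single ⟨s(u, w), h⟩ (ε u) + walkFlow ε p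

lemma walkFlow_apply_of_notMem_edges (ε : V → ℤ) {u v : V} (p : G.Walk u v) {e : G.edgeSet}
    (he : (e : Sym2 V) ∉ p.edges) : walkFlow ε p e = 0 := by
  induction p with
  | nil => rfl
  | cons h p ih =>
    rw [Walk.edges_cons, List.mem_cons, not_or] at he
    rw [walkFlow, Pi.add_apply, Pi.single_eq_of_ne (fun h' => he.1 (congrArg Subtype.val h')),
      ih he.2, add_zero]

lemma sum_incident_single {A : Type*} [AddCommGroup A] [Fintype G.edgeSet] (e : G.edgeSet)
    (c : A) (r : V) :
    ∑ e' ∈ univ.filter (fun e' : G.edgeSet => r ∈ (e' : Sym2 V)), Pi.single e c e' =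
      if r ∈ (e : Sym2 V) then c else 0 := by
  simp

lemma sum_incident_walkFlow [Fintype G.edgeSet] {ε : V → ℤ}
    (hε : ∀ ⦃x y : V⦄, G.Adj x y → ε y = -ε x) {u v : V} (p : G.Walk u v) (r : V) :
    ∑ e ∈ univ.filter (fun e : G.edgeSet => r ∈ (e : Sym2 V)), walkFlow ε p e =
      (if r = u then ε u else 0) - (if r = v then ε v else 0) := by
  induction p with
  | nil => simp [walkFlow]
  | @cons u w v h p ih =>
    simp only [walkFlow, Pi.add_apply, sum_add_distrib, ih, sum_incident_single, Sym2.mem_iff,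
      hε h]
    have := h.ne
    by_cases hu : r = u <;> by_cases hw : r = w <;> simp_all <;> ring

end WalkFlow

lemma SimpleGraph.not_isBridge_of_connected_deleteEdges {V : Type*} {G : SimpleGraph V}
    {e : Sym2 V} (h : (G.deleteEdges {e}).Connected) : ¬G.IsBridge e := by
  induction e using Sym2.ind with
  | _ u v => exact fun hb => isBridge_iff.mp hb (h.preconnected u v)

section Splitting

variable {A : Type*} [AddCommGroup A] {V : Type*} [Fintype V] {G : SimpleGraph V}

lemma exists_mem_Theta_int_apply_eq_one (side : V → Bool)
    (hbip : ∀ ⦃v w : V⦄, G.Adj v w → side v ≠ side w) (e₀ : G.edgeSet)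
    (he₀ : ¬G.IsBridge e₀) : ∃ z ∈ Theta ℤ G, z e₀ = 1 := by
  obtain ⟨e, he⟩ := e₀
  induction e using Sym2.ind with
  | _ u v =>
  obtain ⟨p, hp⟩ : ∃ p : G.Walk u v, s(u, v) ∉ p.edges := by
    simpa [isBridge_iff_forall_walk_mem_edges] using he₀
  have huv : G.Adj u v := he
  let ε : V → ℤ := fun x => if side x = side u then -1 else 1
  have hε : ∀ ⦃x y : V⦄, G.Adj x y → ε y = -ε x := by
    intro x y hxy
    have := hbip hxy
    simp only [ε]
    revert this
    cases side x <;> cases side y <;> cases side u <;> simp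
  have hεv : ε v = 1 := if_neg (hbip huv).symm
  refine ⟨walkFlow ε p + Pi.single ⟨s(u, v), he⟩ 1, fun r => ?_, ?_⟩
  · simp only [Pi.add_apply, sum_add_distrib, sum_incident_walkFlow hε, sum_incident_single,
      Sym2.mem_iff, hεv]
    have := huv.ne
    by_cases hu : r = u <;> by_cases hv : r = v <;> simp_all [ε]
  · simp [walkFlow_apply_of_notMem_edges ε p (e := ⟨s(u, v), he⟩) hp]

lemma zsmul_mem_Theta {z : G.edgeSet → ℤ} (hz : z ∈ Theta ℤ G) (a : A) :
    (fun e => z e • a) ∈ Theta A G :=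
  fun r => by rw [← sum_smul, hz r, zero_smul]

noncomputable def zsmulThetaHom {z : G.edgeSet → ℤ} (hz : z ∈ Theta ℤ G) :
    A →+ Theta A G :=
  AddMonoidHom.mk' (fun a => ⟨fun e => z e • a, zsmul_mem_Theta hz a⟩)
    fun _ _ => Subtype.ext (funext fun _ => smul_add _ _ _)

variable (A G) in
noncomputable def extendByZeroHom (e₀ : Sym2 V) : Theta A (G.deleteEdges {e₀}) →+ Theta A G :=
  AddMonoidHom.mk'
    (fun y => ⟨extendByZero G e₀ y.1, (extendByZero_mem_Theta_iff e₀ y.1).2 y.2⟩)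
    fun y y' => Subtype.ext (extendByZero_add e₀ y.1 y'.1)

@[simp]
lemma coe_extendByZeroHom (e₀ : Sym2 V) (y : Theta A (G.deleteEdges {e₀})) :
    (extendByZeroHom A G e₀ y : G.edgeSet → A) = extendByZero G e₀ y :=
  rfl

lemma extendByZeroHom_injective (e₀ : Sym2 V) : Function.Injective (extendByZeroHom A G e₀) :=
  fun y y' h => Subtype.ext (extendByZero_injective e₀ (by simpa using congrArg Subtype.val h))

noncomputable def evalThetaHom (e₀ : G.edgeSet) : Theta A G →+ A :=
  (Pi.evalAddMonoidHom (fun _ => A) e₀).comp (Theta A G).subtype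

lemma exact_extendByZeroHom_evalThetaHom (e₀ : G.edgeSet) :
    Function.Exact (extendByZeroHom A G (e₀ : Sym2 V)) (evalThetaHom e₀) := fun x =>
  (apply_eq_zero_iff_exists_extendByZero_eq x.2).trans
    ⟨fun ⟨y, hy, h⟩ => ⟨⟨y, hy⟩, Subtype.ext h⟩,
      fun ⟨y, h⟩ => ⟨y.1, y.2, by rw [← coe_extendByZeroHom, h]⟩⟩

end Splitting

theorem stmt_4_general {A : Type*} [AddCommGroup A] {V : Type*} [Fintype V]
    (G : SimpleGraph V)
    (side : V → Bool)
    (hbip : ∀ ⦃v w : V⦄, G.Adj v w → side v ≠ side w)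
    (e₀ : G.edgeSet)
    (hdel : (G.deleteEdges {(e₀ : Sym2 V)}).Connected) :
    -- the extension-by-zero map sends `Θ_A(Γ′)` into `Θ_A(Γ)` ...
    (∀ y : (G.deleteEdges {(e₀ : Sym2 V)}).edgeSet → A,
        y ∈ Theta A (G.deleteEdges {(e₀ : Sym2 V)}) →
        extendByZero G (e₀ : Sym2 V) y ∈ Theta A G) ∧
    -- ... injectively (exactness at `Θ_A(Γ′)`) ...
    Function.Injective
      (fun y : Theta A (G.deleteEdges {(e₀ : Sym2 V)}) =>
        extendByZero G (e₀ : Sym2 V) y.1) ∧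
    -- ... with image the kernel of the projection at `e₀` (exactness at `Θ_A(Γ)`) ...
    (∀ x : G.edgeSet → A, x ∈ Theta A G →
        (x e₀ = 0 ↔ ∃ y ∈ Theta A (G.deleteEdges {(e₀ : Sym2 V)}),
          extendByZero G (e₀ : Sym2 V) y = x)) ∧
    -- ... and consequently `Θ_A(Γ) ≅ Θ_A(Γ′) ⊕ A`.
    Nonempty (Theta A G ≃+ Theta A (G.deleteEdges {(e₀ : Sym2 V)}) × A) := by
  refine ⟨fun y hy => (extendByZero_mem_Theta_iff _ y).2 hy,
    fun y y' h => Subtype.ext (extendByZero_injective _ h),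
    fun x hx => apply_eq_zero_iff_exists_extendByZero_eq hx, ?_⟩
  obtain ⟨z, hz, hz₀⟩ := exists_mem_Theta_int_apply_eq_one side hbip e₀
    (not_isBridge_of_connected_deleteEdges hdel)
  have hsection : (evalThetaHom e₀).toIntLinearMap ∘ₗ
      (zsmulThetaHom (A := A) hz).toIntLinearMap = .id := by
    ext a
    simp [evalThetaHom, zsmulThetaHom, hz₀]
  have hexact : Function.Exact (extendByZeroHom A G e₀).toIntLinearMap
      (evalThetaHom (A := A) e₀).toIntLinearMap :=
    exact_extendByZeroHom_evalThetaHom e₀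
  have hinj : Function.Injective (extendByZeroHom A G e₀).toIntLinearMap :=
    extendByZeroHom_injective _
  exact ⟨(hexact.splitSurjectiveEquiv hinj ⟨_, hsection⟩).1.toAddEquiv⟩

/-- **Inductive step of Lemme 1.2 (ii).** If `Γ′` is the graph obtained from the finite
connected bipartite graph `Γ` by deleting an edge `e₀` whose removal keeps `Γ` connected,
then the sequence `0 → Θ_A(Γ′) → Θ_A(Γ) → A` (extension by zero followed by the projection
at `e₀`) is exact, and `Θ_A(Γ) ≅ Θ_A(Γ′) ⊕ A`. -/
theorem stmt_4 {A : Type*} [AddCommGroup A] {V : Type*} [Fintype V]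
    (G : SimpleGraph V) (hconn : G.Connected)
    (side : V → Bool)
    (hbip : ∀ ⦃v w : V⦄, G.Adj v w → side v ≠ side w)
    (e₀ : G.edgeSet)
    (hdel : (G.deleteEdges {(e₀ : Sym2 V)}).Connected) :
    -- the extension-by-zero map sends `Θ_A(Γ′)` into `Θ_A(Γ)` ...
    (∀ y : (G.deleteEdges {(e₀ : Sym2 V)}).edgeSet → A,
        y ∈ Theta A (G.deleteEdges {(e₀ : Sym2 V)}) →
        extendByZero G (e₀ : Sym2 V) y ∈ Theta A G) ∧
    -- ... injectively (exactness at `Θ_A(Γ′)`) ...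
    Function.Injective
      (fun y : Theta A (G.deleteEdges {(e₀ : Sym2 V)}) =>
        extendByZero G (e₀ : Sym2 V) y.1) ∧
    -- ... with image the kernel of the projection at `e₀` (exactness at `Θ_A(Γ)`) ...
    (∀ x : G.edgeSet → A, x ∈ Theta A G →
        (x e₀ = 0 ↔ ∃ y ∈ Theta A (G.deleteEdges {(e₀ : Sym2 V)}),
          extendByZero G (e₀ : Sym2 V) y = x)) ∧
    -- ... and consequently `Θ_A(Γ) ≅ Θ_A(Γ′) ⊕ A`.
    Nonempty (Theta A G ≃+ Theta A (G.deleteEdges {(e₀ : Sym2 V)}) × A) :=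
  stmt_4_general G side hbip e₀ hdel
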